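/- arXiv:1204.5308 — 5 statements merged into one kernel-verified Lean document; each statement's English description precedes it below -/
import Mathlib

section
/- Let A, B ⊆ S^3 be compact convex sets such that A ∪ B contains no pair of antipodal points. Then Join(A, B) is convex. -/
open Metric

noncomputable section

/-- The join of two subsets of S³ (points represented by unit vectors of
`EuclideanSpace ℝ (Fin 4)`). -/
def sJoin (A B : Set (EuclideanSpace ℝ (Fin 4))) : Set (EuclideanSpace ℝ (Fin 4)) :=
  {u | ∃ a ∈ A, ∃ b ∈ B, ∃ c₁ c₂ : ℝ, 0 ≤ c₁ ∧ 0 ≤ c₂ ∧ c₁ • a + c₂ • b ≠ 0 ∧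
    u = ‖c₁ • a + c₂ • b‖⁻¹ • (c₁ • a + c₂ • b)}

/-- Spherical convexity: every pair of points of C is joined inside C by a
great-circle geodesic segment of length θ ≤ π, parametrized as
t ↦ cos(tθ)·u + sin(tθ)·q with q a unit vector orthogonal to u. -/
def SConvex (C : Set (EuclideanSpace ℝ (Fin 4))) : Prop :=
  ∀ u ∈ C, ∀ v ∈ C, ∃ (θ : ℝ) (q : EuclideanSpace ℝ (Fin 4)),
    0 ≤ θ ∧ θ ≤ Real.pi ∧ ‖q‖ = 1 ∧ (inner ℝ u q : ℝ) = 0 ∧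
    v = Real.cos θ • u + Real.sin θ • q ∧
    ∀ t ∈ Set.Icc (0 : ℝ) 1, Real.cos (t * θ) • u + Real.sin (t * θ) • q ∈ C

/-!
A point of `Join(A, B)` is the normalization of a nonnegative combination of a point of `A` and a
point of `B`, so the join is the trace on the unit sphere of the convex cone `hull A ⊔ hull B`. A
spherically convex set `C` is in turn the trace of `hull C`, because a normalized nonnegative
combination of two of its points lies on the arc joining them. The absence of antipodal pairs
makes `hull A ⊔ hull B` salient, and the trace of a salient convex cone on the sphere is
spherically convex: two of its points are not antipodal, and the arc between them consists of
normalized nonnegative combinations of its endpoints.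
-/

open Real Set InnerProductGeometry
open scoped InnerProductSpace

lemma Real.sin_arccos_div {x y r : ℝ} (hy : 0 ≤ y) (hr : 0 < r) (h : x ^ 2 + y ^ 2 = r ^ 2) :
    sin (arccos (x / r)) = y / r := by
  have : 1 - (x / r) ^ 2 = (y / r) ^ 2 := by
    field_simp
    linarith
  rw [sin_arccos, this, sqrt_sq (div_nonneg hy hr.le)]

lemma Real.cos_arccos_div {x y r : ℝ} (hr : 0 < r) (h : x ^ 2 + y ^ 2 = r ^ 2) :
    cos (arccos (x / r)) = x / r := by
  have hx := abs_le_of_sq_le_sq' (a := x) (by nlinarith) hr.le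
  exact cos_arccos (by rw [le_div_iff₀ hr]; linarith) (by rw [div_le_one hr]; linarith)

section InnerProductSpace

variable {E : Type*} [NormedAddCommGroup E] [InnerProductSpace ℝ E]

lemma exists_norm_eq_one_inner_eq_zero [FiniteDimensional ℝ E] (hE : 1 < Module.finrank ℝ E)
    (u : E) : ∃ q : E, ‖q‖ = 1 ∧ ⟪u, q⟫_ℝ = 0 := by
  obtain ⟨w, hw, hw0⟩ := Submodule.exists_mem_ne_zero_of_ne_bot
    ((innerₛₗ ℝ u).ker_ne_bot_of_finrank_lt (by rwa [Module.finrank_self]))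
  exact ⟨‖w‖⁻¹ • w, norm_smul_inv_norm hw0, by simp_all [real_inner_smul_right]⟩

lemma eq_zero_and_eq_zero_of_smul_add_smul_eq_zero {S : Set E} (hS : S ⊆ sphere 0 1)
    (hant : ∀ p ∈ S, -p ∉ S) {p p' : E} (hp : p ∈ S) (hp' : p' ∈ S) {r r' : ℝ} (hr : 0 ≤ r)
    (hr' : 0 ≤ r') (h : r • p + r' • p' = 0) : r = 0 ∧ r' = 0 := by
  have hrp : r • p = -(r' • p') := eq_neg_of_add_eq_zero_left h
  have hrr' : r = r' := by
    simpa [norm_smul, abs_of_nonneg hr, abs_of_nonneg hr', mem_sphere_zero_iff_norm.1 (hS hp),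
      mem_sphere_zero_iff_norm.1 (hS hp')] using congrArg norm hrp
  subst hrr'
  suffices r = 0 from ⟨this, this⟩
  by_contra hr0
  have hpp' : p = -p' := smul_right_injective E hr0 (hrp.trans (smul_neg r p').symm)
  exact hant p' hp' (hpp' ▸ hp)

lemma exists_geodesic_of_ne_of_ne_neg {u v : E} (hu : ‖u‖ = 1) (hv : ‖v‖ = 1) (huv : u ≠ v)
    (hvu : v ≠ -u) :
    ∃ (θ : ℝ) (q : E), 0 ≤ θ ∧ θ ≤ π ∧ ‖q‖ = 1 ∧ ⟪u, q⟫_ℝ = 0 ∧ v = cos θ • u + sin θ • q ∧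
      ∀ t ∈ Icc (0 : ℝ) 1, ∃ s₁ s₂ : ℝ, 0 ≤ s₁ ∧ 0 ≤ s₂ ∧
        cos (t * θ) • u + sin (t * θ) • q = s₁ • u + s₂ • v := by
  set θ := angle u v
  have hθ0 : θ ≠ 0 := fun h => huv (eq_of_angle_eq_zero_of_norm_eq h (hu.trans hv.symm))
  have hθπ : θ ≠ π := by
    intro h
    obtain ⟨-, r, hr, rfl⟩ := angle_eq_pi_iff.1 h
    have : r = -1 := by
      rw [norm_smul, hu, mul_one, Real.norm_eq_abs, abs_of_neg hr] at hv
      linarith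
    exact hvu (by simp [this])
  have hsin : 0 < sin θ := sin_pos_of_pos_of_lt_pi ((angle_nonneg u v).lt_of_ne' hθ0)
    ((angle_le_pi u v).lt_of_ne hθπ)
  have hcos : ⟪u, v⟫_ℝ = cos θ := inner_eq_cos_angle_of_norm_eq_one hu hv
  set q := (sin θ)⁻¹ • (v - cos θ • u)
  have huq : ⟪u, q⟫_ℝ = 0 := by
    simp [q, real_inner_smul_right, inner_sub_right, hcos, hu]
  have hq : ‖q‖ = 1 := by
    have h2 : ‖v - cos θ • u‖ ^ 2 = sin θ ^ 2 := by
      rw [norm_sub_sq_real, real_inner_smul_right, real_inner_comm, hcos, norm_smul, hu, hv,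
        Real.norm_eq_abs, mul_pow, sq_abs]
      linear_combination -sin_sq_add_cos_sq θ
    rw [norm_smul, norm_inv, Real.norm_eq_abs, abs_of_pos hsin,
      (sq_eq_sq₀ (norm_nonneg _) hsin.le).1 h2, inv_mul_cancel₀ hsin.ne']
  have hvq : v = cos θ • u + sin θ • q := by
    simp only [q, smul_smul, mul_inv_cancel₀ hsin.ne', one_smul]
    abel
  have hcoeff : ∀ s ∈ Icc (0 : ℝ) 1, 0 ≤ sin (s * θ) / sin θ := fun s ⟨hs0, hs1⟩ =>
    div_nonneg (sin_nonneg_of_nonneg_of_le_pi (by nlinarith [angle_nonneg u v])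
      (by nlinarith [angle_nonneg u v, angle_le_pi u v])) hsin.le
  refine ⟨θ, q, angle_nonneg u v, angle_le_pi u v, hq, huq, hvq, fun t ⟨ht0, ht1⟩ => ?_⟩
  refine ⟨sin ((1 - t) * θ) / sin θ, sin (t * θ) / sin θ, hcoeff _ ⟨by linarith, by linarith⟩,
    hcoeff t ⟨ht0, ht1⟩, ?_⟩
  rw [show (1 - t) * θ = θ - t * θ by ring, sin_sub, hvq]
  match_scalars
  · field_simp
    ring
  · field_simp

variable {a q : E} (ha : ‖a‖ = 1) (hq : ‖q‖ = 1) (haq : ⟪a, q⟫_ℝ = 0)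
include ha hq haq

lemma norm_smul_add_smul_sq (x y : ℝ) : ‖x • a + y • q‖ ^ 2 = x ^ 2 + y ^ 2 := by
  rw [norm_add_sq_real, real_inner_smul_left, real_inner_smul_right, haq, norm_smul, norm_smul,
    ha, hq]
  simp [sq_abs]

lemma norm_cos_smul_add_sin_smul (φ : ℝ) : ‖cos φ • a + sin φ • q‖ = 1 := by
  rw [← pow_eq_one_iff_of_nonneg (norm_nonneg _) two_ne_zero,
    norm_smul_add_smul_sq ha hq haq, cos_sq_add_sin_sq]

lemma inv_norm_smul_eq_cos_arccos_smul_add_sin {x y : ℝ} (hy : 0 ≤ y) (hw : x • a + y • q ≠ 0) :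
    ‖x • a + y • q‖⁻¹ • (x • a + y • q) =
      cos (arccos (x / ‖x • a + y • q‖)) • a + sin (arccos (x / ‖x • a + y • q‖)) • q := by
  have hr := norm_smul_add_smul_sq ha hq haq x y
  have hr0 := norm_pos_iff.2 hw
  rw [cos_arccos_div hr0 hr.symm, sin_arccos_div hy hr0 hr.symm]
  module

end InnerProductSpace

local notation "E4" => EuclideanSpace ℝ (Fin 4)

open PointedCone

lemma SConvex.exists_mem_eq_norm_smul {C : Set E4} (hconv : SConvex C) (hC : C ⊆ sphere 0 1)
    {a a' : E4} (ha : a ∈ C) (ha' : a' ∈ C) {α β : ℝ} (hα : 0 ≤ α) (hβ : 0 ≤ β) :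
    ∃ p ∈ C, α • a + β • a' = ‖α • a + β • a'‖ • p := by
  rcases eq_or_ne (α • a + β • a') 0 with hw | hw
  · exact ⟨a, ha, by simp [hw]⟩
  obtain ⟨θ, q, hθ0, hθπ, hq, haq, ha'q, hseg⟩ := hconv a ha a' ha'
  have hna : ‖a‖ = 1 := mem_sphere_zero_iff_norm.1 (hC ha)
  have hwq : α • a + β • a' = (α + β * cos θ) • a + (β * sin θ) • q := by
    rw [ha'q]
    module
  set r := ‖α • a + β • a'‖
  have hβr : |r - β| ≤ α := by
    simpa [norm_smul, abs_of_nonneg hα, abs_of_nonneg hβ, hna,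
      mem_sphere_zero_iff_norm.1 (hC ha')] using abs_norm_sub_norm_le (α • a + β • a') (β • a')
  -- the normalized point makes an angle `φ ≤ θ` with `a`, so it lies on the arc from `a` to `a'`
  set φ := arccos ((α + β * cos θ) / r)
  have hφθ : φ ≤ θ := by
    have hcos : cos θ * r ≤ α + β * cos θ := by
      nlinarith [abs_le.1 hβr, neg_one_le_cos θ, cos_le_one θ]
    calc φ ≤ arccos (cos θ) :=
          arccos_le_arccos ((le_div_iff₀ (norm_pos_iff.2 hw)).2 hcos)
      _ = θ := arccos_cos hθ0 hθπ
  obtain ⟨t, ht, htφ⟩ : ∃ t ∈ Icc (0 : ℝ) 1, t * θ = φ := by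
    rcases hθ0.eq_or_lt with hθ | hθ
    · exact ⟨0, ⟨le_rfl, zero_le_one⟩, by linarith [arccos_nonneg ((α + β * cos θ) / r)]⟩
    · exact ⟨φ / θ, ⟨div_nonneg (arccos_nonneg _) hθ.le, (div_le_one hθ).2 hφθ⟩,
        div_mul_cancel₀ φ hθ.ne'⟩
  have hnormalize := inv_norm_smul_eq_cos_arccos_smul_add_sin hna hq haq
    (mul_nonneg hβ (sin_nonneg_of_nonneg_of_le_pi hθ0 hθπ)) (hwq ▸ hw)
  rw [← hwq] at hnormalize
  refine ⟨_, hseg t ht, ?_⟩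
  rw [htφ, ← hnormalize, smul_inv_smul₀ (norm_ne_zero_iff.2 hw)]

section Hull

variable {C : Set E4} (hconv : SConvex C) (hC : C ⊆ sphere 0 1)
include hconv hC

lemma SConvex.mem_hull_iff (hne : C.Nonempty) {x : E4} :
    x ∈ hull ℝ C ↔ ∃ r : ℝ, 0 ≤ r ∧ ∃ c ∈ C, x = r • c := by
  refine ⟨fun hx => ?_, fun ⟨r, hr, c, hc, hx⟩ => hx ▸ smul_mem _ hr (subset_hull hc)⟩
  induction hx using Submodule.span_induction with
  | mem x hx => exact ⟨1, zero_le_one, x, hx, (one_smul ℝ x).symm⟩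
  | zero => exact ⟨0, le_rfl, hne.some, hne.some_mem, (zero_smul ℝ _).symm⟩
  | add x y _ _ hx hy =>
    obtain ⟨r, hr, c, hc, rfl⟩ := hx
    obtain ⟨r', hr', c', hc', rfl⟩ := hy
    obtain ⟨p, hp, hrp⟩ := hconv.exists_mem_eq_norm_smul hC hc hc' hr hr'
    exact ⟨_, norm_nonneg _, p, hp, hrp⟩
  | smul s x _ hx =>
    obtain ⟨r, hr, c, hc, rfl⟩ := hx
    exact ⟨s * r, mul_nonneg s.2 hr, c, hc, by rw [← Nonneg.coe_smul, smul_smul]⟩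

lemma SConvex.eq_zero_of_add_eq_zero_of_mem_hull (hne : C.Nonempty) (hant : ∀ p ∈ C, -p ∉ C)
    {x y : E4} (hx : x ∈ hull ℝ C) (hy : y ∈ hull ℝ C) (hxy : x + y = 0) : x = 0 := by
  obtain ⟨r, hr, c, hc, rfl⟩ := (hconv.mem_hull_iff hC hne).1 hx
  obtain ⟨r', hr', c', hc', rfl⟩ := (hconv.mem_hull_iff hC hne).1 hy
  simp [(eq_zero_and_eq_zero_of_smul_add_smul_eq_zero hC hant hc hc' hr hr' hxy).1]

end Hull

section Join

variable {A B : Set E4} (hAs : A ⊆ sphere 0 1) (hBs : B ⊆ sphere 0 1) (hAconv : SConvex A)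
  (hBconv : SConvex B) (hA : A.Nonempty) (hB : B.Nonempty)
include hAs hBs hAconv hBconv hA hB

lemma salient_hull_sup_hull (hant : ∀ u ∈ A ∪ B, -u ∉ A ∪ B) :
    ((hull ℝ A ⊔ hull ℝ B : PointedCone ℝ E4) : ConvexCone ℝ E4).Salient := by
  intro x hx hx0 hnx
  obtain ⟨xA, hxA, xB, hxB, rfl⟩ := Submodule.mem_sup.1 hx
  obtain ⟨yA, hyA, yB, hyB, hy⟩ := Submodule.mem_sup.1 hnx
  obtain ⟨ρ, hρ, p, hp, hρp⟩ := (hAconv.mem_hull_iff hAs hA).1 (add_mem hxA hyA)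
  obtain ⟨σ, hσ, p', hp', hσp'⟩ := (hBconv.mem_hull_iff hBs hB).1 (add_mem hxB hyB)
  obtain ⟨rfl, rfl⟩ := eq_zero_and_eq_zero_of_smul_add_smul_eq_zero (union_subset hAs hBs) hant
    (Or.inl hp) (Or.inr hp') hρ hσ (by rw [← hρp, ← hσp', ← neg_add_cancel (xA + xB), ← hy]; abel)
  rw [zero_smul] at hρp hσp'
  have hantA : ∀ p ∈ A, -p ∉ A := fun p hp h => hant p (Or.inl hp) (Or.inl h)
  have hantB : ∀ p ∈ B, -p ∉ B := fun p hp h => hant p (Or.inr hp) (Or.inr h)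
  exact hx0 (by rw [hAconv.eq_zero_of_add_eq_zero_of_mem_hull hAs hA hantA hxA hyA hρp,
    hBconv.eq_zero_of_add_eq_zero_of_mem_hull hBs hB hantB hxB hyB hσp', add_zero])

lemma sJoin_eq_hull_sup_hull_inter_sphere :
    sJoin A B = ((hull ℝ A ⊔ hull ℝ B : PointedCone ℝ E4) : Set E4) ∩ sphere 0 1 := by
  ext u
  constructor
  · rintro ⟨a, ha, b, hb, c₁, c₂, hc₁, hc₂, hw, rfl⟩
    refine ⟨smul_mem _ (inv_nonneg.2 (norm_nonneg _)) (add_mem ?_ ?_), ?_⟩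
    · exact Submodule.mem_sup_left (smul_mem _ hc₁ (subset_hull ha))
    · exact Submodule.mem_sup_right (smul_mem _ hc₂ (subset_hull hb))
    · exact mem_sphere_zero_iff_norm.2 (norm_smul_inv_norm hw)
  · rintro ⟨hu, hu1⟩
    obtain ⟨x, hx, y, hy, rfl⟩ := Submodule.mem_sup.1 hu
    obtain ⟨ρ, hρ, a, ha, rfl⟩ := (hAconv.mem_hull_iff hAs hA).1 hx
    obtain ⟨σ, hσ, b, hb, rfl⟩ := (hBconv.mem_hull_iff hBs hB).1 hy
    rw [mem_sphere_zero_iff_norm] at hu1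
    exact ⟨a, ha, b, hb, ρ, σ, hρ, hσ, norm_ne_zero_iff.1 (by simp [hu1]), by simp [hu1]⟩

end Join

lemma sConvex_inter_sphere {K : PointedCone ℝ E4} (hK : (K : ConvexCone ℝ E4).Salient) :
    SConvex ((K : Set E4) ∩ sphere 0 1) := by
  rintro u ⟨huK, hu⟩ v ⟨hvK, hv⟩
  rw [mem_sphere_zero_iff_norm] at hu hv
  rcases eq_or_ne u v with rfl | huv
  · obtain ⟨q, hq, huq⟩ := exists_norm_eq_one_inner_eq_zero (by simp) u
    exact ⟨0, q, le_rfl, pi_pos.le, hq, huq, by simp, fun t _ => by simp [huK, hu]⟩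
  have hvu : v ≠ -u := fun h => hK u huK (norm_ne_zero_iff.1 (by simp [hu])) (h ▸ hvK)
  obtain ⟨θ, q, hθ0, hθπ, hq, huq, hvq, hcomb⟩ := exists_geodesic_of_ne_of_ne_neg hu hv huv hvu
  refine ⟨θ, q, hθ0, hθπ, hq, huq, hvq, fun t ht => ⟨?_, ?_⟩⟩
  · obtain ⟨s₁, s₂, hs₁, hs₂, hts⟩ := hcomb t ht
    rw [hts]
    exact add_mem (smul_mem _ hs₁ huK) (smul_mem _ hs₂ hvK)
  · exact mem_sphere_zero_iff_norm.2 (norm_cos_smul_add_sin_smul hu hq huq _)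

theorem stmt5_general (A B : Set (EuclideanSpace ℝ (Fin 4)))
    (hAs : A ⊆ sphere 0 1) (hBs : B ⊆ sphere 0 1)
    (hAconv : SConvex A) (hBconv : SConvex B)
    (hant : ∀ u ∈ A ∪ B, -u ∉ A ∪ B) :
    SConvex (sJoin A B) := by
  rcases A.eq_empty_or_nonempty with rfl | hA
  · simp [SConvex, sJoin]
  rcases B.eq_empty_or_nonempty with rfl | hB
  · simp [SConvex, sJoin]
  rw [sJoin_eq_hull_sup_hull_inter_sphere hAs hBs hAconv hBconv hA hB]
  exact sConvex_inter_sphere (salient_hull_sup_hull hAs hBs hAconv hBconv hA hB hant)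

/-- If A, B ⊆ S³ are compact convex sets such that A ∪ B contains
no pair of antipodal points, then Join(A,B) is convex. -/
theorem stmt5 (A B : Set (EuclideanSpace ℝ (Fin 4)))
    (hAs : A ⊆ sphere 0 1) (hBs : B ⊆ sphere 0 1)
    (hAc : IsCompact A) (hBc : IsCompact B)
    (hAconv : SConvex A) (hBconv : SConvex B)
    (hant : ∀ u ∈ A ∪ B, -u ∉ A ∪ B) :
    SConvex (sJoin A B) :=
  stmt5_general A B hAs hBs hAconv hBconv hant
end
end

section
/- Let {A_n} and {B_n} be sequences of compact properly convex subsets of S^3 converging in the Hausdorff metric to compact properly convex sets A and B respectively, with A ∩ (−B) = ∅. Then there is I_0 such that Join(A_n, B_n) is defined for n > I_0, and the sequence {Join(A_n, B_n)} converges in the Hausdorff metric to Join(A, B). -/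
/-!
A point of `Join(A, B)` is the normalisation of a combination `(1 - t) a + t b`. Moving `a` and
`b` by at most `δ` moves the combination by at most `δ`, and normalisation is `2 / c`-Lipschitz
at points of norm `≥ c`. For unit vectors `‖(1 - t) a + t b‖ ≥ ‖a + b‖ / 2`, and compactness
together with `A ∩ (-B) = ∅` gives `‖a + b‖ ≥ m > 0` on `A × B`; once `Aₙ`, `Bₙ` are
`m / 4`-close to `A`, `B`, the bound `‖a + b‖ ≥ m / 2` holds on `Aₙ × Bₙ` as well, which also
rules out antipodal pairs. Hence the joins are `8 δ / m`-close in the Hausdorff metric.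
-/

open Metric Filter

noncomputable section

/-- A compact properly convex subset of S³: nonempty, compact, convex, with
no pair of antipodal points. -/
def ProperlyConvex (C : Set (EuclideanSpace ℝ (Fin 4))) : Prop :=
  C.Nonempty ∧ C ⊆ sphere 0 1 ∧ IsCompact C ∧ SConvex C ∧ ∀ u ∈ C, -u ∉ C

local notation "ℝ⁴" => EuclideanSpace ℝ (Fin 4)

section

variable {V : Type*} [NormedAddCommGroup V] [NormedSpace ℝ V]

namespace NormedSpace

theorem norm_normalize_le_one (x : V) : ‖normalize x‖ ≤ 1 := by
  by_cases hx : x = 0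
  · simp [hx]
  · exact (norm_normalize hx).le

theorem norm_normalize_sub_normalize_le {x : V} (hx : x ≠ 0) (y : V) :
    ‖normalize x - normalize y‖ ≤ 2 * ‖x - y‖ / ‖x‖ := by
  have hx₀ : 0 < ‖x‖ := norm_pos_iff.mpr hx
  have hdecomp : normalize x - normalize y
      = ‖x‖⁻¹ • (x - y) + (‖x‖⁻¹ * (‖y‖ - ‖x‖)) • normalize y := by
    rw [show normalize x = ‖x‖⁻¹ • x from rfl]
    linear_combination (norm := match_scalars <;> field_simp <;> ring)
      -‖x‖⁻¹ • norm_smul_normalize y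
  calc ‖normalize x - normalize y‖
      ≤ ‖x‖⁻¹ * ‖x - y‖ + ‖x‖⁻¹ * |‖y‖ - ‖x‖| * ‖normalize y‖ := by
        rw [hdecomp]
        refine (norm_add_le _ _).trans_eq ?_
        rw [norm_smul, norm_smul, Real.norm_eq_abs, Real.norm_eq_abs, abs_mul,
          abs_of_pos (inv_pos.mpr hx₀)]
    _ ≤ ‖x‖⁻¹ * ‖x - y‖ + ‖x‖⁻¹ * ‖x - y‖ * 1 := by
        gcongr
        · rw [abs_sub_comm]; exact abs_norm_sub_norm_le x y
        · exact norm_normalize_le_one y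
    _ = 2 * ‖x - y‖ / ‖x‖ := by ring

end NormedSpace

theorem dist_smul_add_smul_le {a b a' b' : V} {r t : ℝ} (ha : dist a a' ≤ r)
    (hb : dist b b' ≤ r) (ht : t ∈ Set.Icc (0 : ℝ) 1) :
    dist ((1 - t) • a + t • b) ((1 - t) • a' + t • b') ≤ r := by
  obtain ⟨ht₀, ht₁⟩ := ht
  calc dist ((1 - t) • a + t • b) ((1 - t) • a' + t • b')
      ≤ (1 - t) * dist a a' + t * dist b b' := by
        refine (dist_add_add_le _ _ _ _).trans_eq ?_
        rw [dist_smul₀, dist_smul₀, Real.norm_of_nonneg (by linarith),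
          Real.norm_of_nonneg ht₀]
    _ ≤ (1 - t) * r + t * r := by gcongr
    _ = r := by ring

end

theorem norm_add_div_two_le_norm_smul_add_smul {E : Type*} [NormedAddCommGroup E]
    [InnerProductSpace ℝ E] {a b : E} (ha : ‖a‖ = 1) (hb : ‖b‖ = 1) (t : ℝ) :
    ‖a + b‖ / 2 ≤ ‖(1 - t) • a + t • b‖ := by
  have hinner : inner ℝ a b ≤ 1 := by
    simpa [ha, hb] using real_inner_le_norm a b
  -- the difference of the squares is `(2t - 1)² (1 - ⟪a, b⟫) / 2`
  have hsq : (‖a + b‖ / 2) ^ 2 ≤ ‖(1 - t) • a + t • b‖ ^ 2 := by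
    rw [div_pow, norm_add_sq_real, norm_add_sq_real, norm_smul, norm_smul,
      real_inner_smul_left, real_inner_smul_right, ha, hb, Real.norm_eq_abs, Real.norm_eq_abs,
      mul_pow, mul_pow, sq_abs, sq_abs]
    nlinarith [mul_nonneg (sq_nonneg (2 * t - 1)) (sub_nonneg.mpr hinner)]
  exact pow_le_pow_iff_left₀ (by positivity) (norm_nonneg _) two_ne_zero |>.mp hsq

section

variable {E : Type*} [NormedAddCommGroup E]

theorem exists_pos_le_norm_add {A B : Set E} (hA : IsCompact A) (hB : IsCompact B)
    (hAB : ∀ b ∈ B, -b ∉ A) : ∃ m > 0, ∀ a ∈ A, ∀ b ∈ B, m ≤ ‖a + b‖ := by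
  have hdisj : Disjoint A (-B) :=
    Set.disjoint_left.mpr fun a ha hna => hAB (-a) hna (by rwa [neg_neg])
  obtain ⟨r, hr, hlt⟩ := exists_pos_forall_lt_edist hA hB.neg.isClosed hdisj
  refine ⟨r, hr, fun a ha b hb => ?_⟩
  have := hlt a ha (-b) (by rwa [Set.mem_neg, neg_neg])
  rw [edist_nndist, ENNReal.coe_lt_coe, ← NNReal.coe_lt_coe, coe_nndist, dist_eq_norm,
    sub_neg_eq_add] at this
  exact this.le

theorem sub_two_mul_le_norm_add {A B A' B' : Set E} {m r : ℝ}
    (hsep : ∀ a ∈ A', ∀ b ∈ B', m ≤ ‖a + b‖)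
    (hA : ∀ a ∈ A, ∃ a' ∈ A', dist a a' ≤ r)
    (hB : ∀ b ∈ B, ∃ b' ∈ B', dist b b' ≤ r) :
    ∀ a ∈ A, ∀ b ∈ B, m - 2 * r ≤ ‖a + b‖ := by
  intro a ha b hb
  obtain ⟨a', ha', hda⟩ := hA a ha
  obtain ⟨b', hb', hdb⟩ := hB b hb
  have hclose : ‖a' + b'‖ - ‖a + b‖ ≤ dist a a' + dist b b' := by
    rw [dist_comm a, dist_comm b]
    calc ‖a' + b'‖ - ‖a + b‖ ≤ dist (a' + b') (a + b) := by
          rw [dist_eq_norm]; exact norm_sub_norm_le _ _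
      _ ≤ dist a' a + dist b' b := dist_add_add_le _ _ _ _
  linarith [hsep a' ha' b' hb']

end

theorem exists_dist_le_hausdorffDist {α : Type*} [PseudoMetricSpace α] {s t : Set α} {x : α}
    (hs : Bornology.IsBounded s) (ht : IsCompact t) (ht₀ : t.Nonempty) (hx : x ∈ s) :
    ∃ y ∈ t, dist x y ≤ hausdorffDist s t := by
  obtain ⟨y, hy, hxy⟩ := ht.exists_infDist_eq_dist ht₀ x
  refine ⟨y, hy, hxy ▸ infDist_le_hausdorffDist_of_mem hx ?_⟩
  exact hausdorffEDist_ne_top_of_nonempty_of_bounded ⟨x, hx⟩ ht₀ hs ht.isBounded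

def IsSphericalCompactum (C : Set ℝ⁴) : Prop :=
  C.Nonempty ∧ IsCompact C ∧ C ⊆ sphere 0 1

theorem ProperlyConvex.isSphericalCompactum {C : Set ℝ⁴} (hC : ProperlyConvex C) :
    IsSphericalCompactum C :=
  ⟨hC.1, hC.2.2.1, hC.2.1⟩

theorem IsSphericalCompactum.exists_dist_le {s t : Set ℝ⁴} {x : ℝ⁴} {δ : ℝ}
    (hs : IsSphericalCompactum s) (ht : IsSphericalCompactum t)
    (hst : hausdorffDist s t ≤ δ) (hx : x ∈ s) : ∃ y ∈ t, dist x y ≤ δ :=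
  (exists_dist_le_hausdorffDist hs.2.1.isBounded ht.2.1 ht.1 hx).imp
    fun _ h => ⟨h.1, h.2.trans hst⟩

theorem exists_smul_add_smul_of_mem_sJoin {A B : Set ℝ⁴} {u : ℝ⁴} (hu : u ∈ sJoin A B) :
    ∃ a ∈ A, ∃ b ∈ B, ∃ t ∈ Set.Icc (0 : ℝ) 1,
      u = NormedSpace.normalize ((1 - t) • a + t • b) := by
  obtain ⟨a, ha, b, hb, c₁, c₂, hc₁, hc₂, hne, rfl⟩ := hu
  have hc : 0 < c₁ + c₂ := by
    refine (add_nonneg hc₁ hc₂).lt_of_ne fun h => hne ?_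
    obtain ⟨rfl, rfl⟩ := (add_eq_zero_iff_of_nonneg hc₁ hc₂).mp h.symm
    simp
  refine ⟨a, ha, b, hb, c₂ / (c₁ + c₂),
    ⟨by positivity, by rw [div_le_one hc]; linarith⟩, ?_⟩
  have hsmul :
      c₁ • a + c₂ • b = (c₁ + c₂) • ((1 - c₂ / (c₁ + c₂)) • a + (c₂ / (c₁ + c₂)) • b) := by
    match_scalars <;> field_simp
    ring
  rw [← NormedSpace.normalize_smul_of_pos hc, ← hsmul]
  rfl

theorem normalize_smul_add_smul_mem_sJoin {A B : Set ℝ⁴} {a b : ℝ⁴} {t : ℝ} (ha : a ∈ A)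
    (hb : b ∈ B) (ht : t ∈ Set.Icc (0 : ℝ) 1) (hne : (1 - t) • a + t • b ≠ 0) :
    NormedSpace.normalize ((1 - t) • a + t • b) ∈ sJoin A B :=
  ⟨a, ha, b, hb, 1 - t, t, by linarith [ht.2], ht.1, hne, rfl⟩

theorem exists_mem_sJoin_dist_le {A B A' B' : Set ℝ⁴} {c r : ℝ} (hc : 0 < c)
    (hA' : A' ⊆ sphere 0 1) (hB' : B' ⊆ sphere 0 1)
    (hsep : ∀ a ∈ A', ∀ b ∈ B', c ≤ ‖a + b‖)
    (hA : ∀ a ∈ A, ∃ a' ∈ A', dist a a' ≤ r)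
    (hB : ∀ b ∈ B, ∃ b' ∈ B', dist b b' ≤ r)
    {u : ℝ⁴} (hu : u ∈ sJoin A B) : ∃ u' ∈ sJoin A' B', dist u u' ≤ 4 * r / c := by
  obtain ⟨a, ha, b, hb, t, ht, rfl⟩ := exists_smul_add_smul_of_mem_sJoin hu
  obtain ⟨a', ha', hda⟩ := hA a ha
  obtain ⟨b', hb', hdb⟩ := hB b hb
  set x := (1 - t) • a + t • b
  set x' := (1 - t) • a' + t • b'
  have hx' : c / 2 ≤ ‖x'‖ := by
    have := norm_add_div_two_le_norm_smul_add_smul (mem_sphere_zero_iff_norm.mp (hA' ha'))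
      (mem_sphere_zero_iff_norm.mp (hB' hb')) t
    linarith [hsep a' ha' b' hb']
  have hx'₀ : x' ≠ 0 := norm_pos_iff.mp (by linarith)
  have hr : 0 ≤ r := dist_nonneg.trans hda
  refine ⟨NormedSpace.normalize x', normalize_smul_add_smul_mem_sJoin ha' hb' ht hx'₀, ?_⟩
  calc dist (NormedSpace.normalize x) (NormedSpace.normalize x')
      ≤ 2 * ‖x' - x‖ / ‖x'‖ := by
        rw [dist_comm, dist_eq_norm]
        exact NormedSpace.norm_normalize_sub_normalize_le hx'₀ x
    _ ≤ 2 * r / (c / 2) := by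
        rw [← dist_eq_norm, dist_comm]
        gcongr
        exact dist_smul_add_smul_le hda hdb ht
    _ = 4 * r / c := by field_simp; ring

theorem hausdorffDist_sJoin_le {A B A' B' : Set ℝ⁴} {m δ : ℝ} (hm : 0 < m)
    (hA : IsSphericalCompactum A) (hB : IsSphericalCompactum B)
    (hA' : IsSphericalCompactum A') (hB' : IsSphericalCompactum B')
    (hsep : ∀ a ∈ A', ∀ b ∈ B', m ≤ ‖a + b‖) (hAA' : hausdorffDist A A' ≤ δ)
    (hBB' : hausdorffDist B B' ≤ δ) (hδ : δ ≤ m / 4) :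
    hausdorffDist (sJoin A B) (sJoin A' B') ≤ 8 * δ / m := by
  have hδ₀ : 0 ≤ δ := hausdorffDist_nonneg.trans hAA'
  have hA_near : ∀ a ∈ A, ∃ a' ∈ A', dist a a' ≤ δ := fun _ => hA.exists_dist_le hA' hAA'
  have hB_near : ∀ b ∈ B, ∃ b' ∈ B', dist b b' ≤ δ := fun _ => hB.exists_dist_le hB' hBB'
  have hA'_near : ∀ a ∈ A', ∃ a' ∈ A, dist a a' ≤ δ :=
    fun _ => hA'.exists_dist_le hA (hausdorffDist_comm.trans_le hAA')
  have hB'_near : ∀ b ∈ B', ∃ b' ∈ B, dist b b' ≤ δ :=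
    fun _ => hB'.exists_dist_le hB (hausdorffDist_comm.trans_le hBB')
  have hsep' : ∀ a ∈ A, ∀ b ∈ B, m / 2 ≤ ‖a + b‖ := fun a ha b hb => by
    linarith [sub_two_mul_le_norm_add hsep hA_near hB_near a ha b hb]
  refine hausdorffDist_le_of_mem_dist (by positivity) (fun u hu => ?_) (fun u' hu' => ?_)
  · obtain ⟨u', hu', hd⟩ := exists_mem_sJoin_dist_le hm hA'.2.2 hB'.2.2 hsep hA_near hB_near hu
    exact ⟨u', hu', hd.trans (by gcongr; norm_num)⟩
  · obtain ⟨u, hu, hd⟩ :=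
      exists_mem_sJoin_dist_le (half_pos hm) hA.2.2 hB.2.2 hsep' hA'_near hB'_near hu'
    exact ⟨u, hu, hd.trans_eq (by ring : 4 * δ / (m / 2) = 8 * δ / m)⟩

/-- If Aₙ → A and Bₙ → B in the Hausdorff metric, with all sets
compact properly convex and A ∩ (−B) = ∅, then for large n the join of Aₙ and
Bₙ is defined and Join(Aₙ,Bₙ) → Join(A,B) in the Hausdorff metric. -/
theorem stmt6 (A B : ℕ → Set (EuclideanSpace ℝ (Fin 4)))
    (Ainf Binf : Set (EuclideanSpace ℝ (Fin 4)))
    (hA : ∀ n, ProperlyConvex (A n)) (hB : ∀ n, ProperlyConvex (B n))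
    (hAi : ProperlyConvex Ainf) (hBi : ProperlyConvex Binf)
    (hAconv : Tendsto (fun n => hausdorffDist (A n) Ainf) atTop (nhds 0))
    (hBconv : Tendsto (fun n => hausdorffDist (B n) Binf) atTop (nhds 0))
    (hdisj : ∀ b ∈ Binf, -b ∉ Ainf) :
    ∃ I₀ : ℕ, (∀ n, I₀ < n → ∀ b ∈ B n, -b ∉ A n) ∧
      Tendsto (fun n => hausdorffDist (sJoin (A n) (B n)) (sJoin Ainf Binf))
        atTop (nhds 0) := by
  obtain ⟨m, hm, hsep⟩ := exists_pos_le_norm_add hAi.2.2.1 hBi.2.2.1 hdisj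
  set δ := fun n => max (hausdorffDist (A n) Ainf) (hausdorffDist (B n) Binf)
  have hδ : Tendsto δ atTop (nhds 0) := by simpa using hAconv.max hBconv
  obtain ⟨I₀, hI₀⟩ :=
    eventually_atTop.mp (hδ.eventually (eventually_le_nhds (by positivity : 0 < m / 4)))
  have hjoin :
      ∀ n ≥ I₀, hausdorffDist (sJoin (A n) (B n)) (sJoin Ainf Binf) ≤ 8 * δ n / m :=
    fun n hn => hausdorffDist_sJoin_le hm (hA n).isSphericalCompactum (hB n).isSphericalCompactum
      hAi.isSphericalCompactum hBi.isSphericalCompactum hsep (le_max_left _ _) (le_max_right _ _)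
      (hI₀ n hn)
  refine ⟨I₀, fun n hn b hb hnb => ?_, ?_⟩
  · have hsep_n := sub_two_mul_le_norm_add hsep
      (fun _ => (hA n).isSphericalCompactum.exists_dist_le hAi.isSphericalCompactum
        (le_max_left _ _))
      (fun _ => (hB n).isSphericalCompactum.exists_dist_le hBi.isSphericalCompactum
        (le_max_right _ _))
      (-b) hnb b hb
    rw [neg_add_cancel, norm_zero] at hsep_n
    linarith [hI₀ n hn.le]
  · refine squeeze_zero' (Eventually.of_forall fun n => hausdorffDist_nonneg)
      (eventually_atTop.mpr ⟨I₀, hjoin⟩) ?_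
    simpa using (hδ.const_mul 8).div_const m

end
end

section
/- Let g_{λ,k} be the projective automorphism of S^3 induced by the diagonal-plus-translation matrix with rows (λ,0,0,0), (0,1,0,k), (0,0,1/λ,0), (0,0,0,1), where λ > 1 and k ≥ 0. As λ, k → +∞ with k/λ → 0, the restriction of g_{λ,k} to the set {((x:y:z:t)) : x ≠ 0, t ≥ 0} converges, uniformly on compact subsets, to the map ((x:y:z:t)) ↦ ((sgn(x):0:0:0)); i.e., every compact subset of this set is eventually mapped into any given neighborhood of {e_1, −e_1}. -/
open Filter

noncomputable section

/-- The standard projective boost matrix with parameters (λ, k). -/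
def boostM (l k : ℝ) : Matrix (Fin 4) (Fin 4) ℝ :=
  !![l, 0, 0, 0; 0, 1, 0, k; 0, 0, l⁻¹, 0; 0, 0, 0, 1]

/-- Euclidean norm on ℝ⁴ (as `Fin 4 → ℝ`). -/
def enorm4 (v : Fin 4 → ℝ) : ℝ := Real.sqrt (∑ i, (v i) ^ 2)

/-- Normalization of a vector to the unit sphere, representing the induced
point of S³ = (ℝ⁴ ∖ {0})/ℝ₊. -/
def nmlz (v : Fin 4 → ℝ) : Fin 4 → ℝ := (enorm4 v)⁻¹ • v

/-!
The boost acts by `v ↦ (λx, y + kt, z/λ, t)`. Rescaling by the positive factor `1/(λ|x|)` does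
not move the point of `S³` and gives `(sgn x, (y + kt)/(λ|x|), z/(λ²|x|), t/(λ|x|))`; on the unit
sphere and for `λ ≥ 1` the last three entries have absolute values summing to at most
`(|k| + 3)/(λ|x|)`. Normalizing at most doubles the distance to a unit vector, and `|x|` is
bounded below by some `c > 0` on the compact set `K`, so the distance to `(sgn x : 0 : 0 : 0)` is
at most `2 (|k/λ| + 3/λ)/c → 0`, uniformly on `K`.
-/

open scoped Matrix

theorem norm_inv_norm_smul_sub_le {E : Type*} [NormedAddCommGroup E] [NormedSpace ℝ E]
    (u e : E) (he : ‖e‖ = 1) : ‖‖u‖⁻¹ • u - e‖ ≤ 2 * ‖u - e‖ := by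
  have hscale : ‖‖u‖⁻¹ • u - u‖ ≤ ‖u - e‖ := by
    rcases eq_or_ne u 0 with rfl | hu
    · simp
    · have hu' : (‖u‖⁻¹ - 1) * ‖u‖ = ‖e‖ - ‖u‖ := by
        rw [he, sub_mul, inv_mul_cancel₀ (norm_ne_zero_iff.2 hu), one_mul]
      calc ‖‖u‖⁻¹ • u - u‖ = |‖e‖ - ‖u‖| := by
            rw [← hu', abs_mul, abs_norm, ← Real.norm_eq_abs, ← norm_smul, sub_smul, one_smul]
        _ ≤ ‖u - e‖ := by rw [norm_sub_rev]; exact abs_norm_sub_norm_le e u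
  calc ‖‖u‖⁻¹ • u - e‖ = ‖(‖u‖⁻¹ • u - u) + (u - e)‖ := by rw [sub_add_sub_cancel]
    _ ≤ ‖‖u‖⁻¹ • u - u‖ + ‖u - e‖ := norm_add_le _ _
    _ ≤ 2 * ‖u - e‖ := by linarith

theorem enorm4_eq_norm (v : Fin 4 → ℝ) : enorm4 v = ‖WithLp.toLp 2 v‖ := by
  simp [enorm4, EuclideanSpace.norm_eq]

theorem enorm4_smul (c : ℝ) (v : Fin 4 → ℝ) : enorm4 (c • v) = |c| * enorm4 v := by
  simp only [enorm4_eq_norm, WithLp.toLp_smul, norm_smul, Real.norm_eq_abs]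

theorem enorm4_nmlz_sub_le (u e : Fin 4 → ℝ) (he : enorm4 e = 1) :
    enorm4 (nmlz u - e) ≤ 2 * enorm4 (u - e) := by
  simp only [nmlz, enorm4_eq_norm, WithLp.toLp_sub, WithLp.toLp_smul] at he ⊢
  exact norm_inv_norm_smul_sub_le _ _ he

theorem nmlz_smul_of_pos {c : ℝ} (hc : 0 < c) (v : Fin 4 → ℝ) : nmlz (c • v) = nmlz v := by
  rw [nmlz, nmlz, enorm4_smul, abs_of_pos hc, smul_smul, mul_inv_rev, mul_assoc,
    inv_mul_cancel₀ hc.ne', mul_one]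

theorem abs_apply_le_one_of_enorm4_eq_one {v : Fin 4 → ℝ} (hv : enorm4 v = 1) (i : Fin 4) :
    |v i| ≤ 1 := by
  rw [enorm4_eq_norm] at hv
  simpa [hv] using PiLp.norm_apply_le (WithLp.toLp 2 v) i

theorem enorm4_le_sum_abs (w : Fin 4 → ℝ) : enorm4 w ≤ |w 0| + |w 1| + |w 2| + |w 3| := by
  rw [enorm4, Fin.sum_univ_four, Real.sqrt_le_left (by positivity)]
  simp only [← sq_abs (w _)]
  nlinarith [abs_nonneg (w 0), abs_nonneg (w 1), abs_nonneg (w 2), abs_nonneg (w 3)]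

theorem boostM_mulVec (l k : ℝ) (v : Fin 4 → ℝ) :
    boostM l k *ᵥ v = ![l * v 0, v 1 + k * v 3, l⁻¹ * v 2, v 3] := by
  ext i
  fin_cases i <;> simp [boostM, Matrix.mulVec, dotProduct, Fin.sum_univ_four]

def signedE1 (x : ℝ) : Fin 4 → ℝ := if 0 < x then Pi.single 0 1 else Pi.single 0 (-1)

theorem enorm4_signedE1 (x : ℝ) : enorm4 (signedE1 x) = 1 := by
  unfold signedE1
  split_ifs <;> simp [enorm4, Fin.sum_univ_four]

theorem boostM_mulVec_smul_sub_signedE1 {l : ℝ} (hl : 0 < l) (k : ℝ) {v : Fin 4 → ℝ}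
    (hx : v 0 ≠ 0) :
    (l * |v 0|)⁻¹ • (boostM l k *ᵥ v) - signedE1 (v 0) =
      (l * |v 0|)⁻¹ • ![0, v 1 + k * v 3, l⁻¹ * v 2, v 3] := by
  rw [boostM_mulVec, signedE1]
  ext i
  rcases hx.lt_or_gt with hneg | hpos
  · fin_cases i <;> simp [hneg.not_gt, abs_of_neg hneg]
    field_simp
    ring
  · fin_cases i <;> simp [hpos, abs_of_pos hpos]
    field_simp
    ring

theorem enorm4_boostM_tail_le {l : ℝ} (hl : 1 ≤ l) (k : ℝ) {v : Fin 4 → ℝ} (hv : enorm4 v = 1) :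
    enorm4 ![0, v 1 + k * v 3, l⁻¹ * v 2, v 3] ≤ |k| + 3 := by
  have hy := abs_apply_le_one_of_enorm4_eq_one hv 1
  have hz := abs_apply_le_one_of_enorm4_eq_one hv 2
  have ht := abs_apply_le_one_of_enorm4_eq_one hv 3
  have hyt : |v 1 + k * v 3| ≤ 1 + |k| := by
    grw [abs_add_le, abs_mul, hy, mul_le_of_le_one_right (abs_nonneg k) ht]
  have hz' : |l⁻¹ * v 2| ≤ 1 := by
    rw [abs_mul, abs_inv, abs_of_pos (by linarith)]
    exact mul_le_one₀ (inv_le_one_of_one_le₀ hl) (abs_nonneg _) hz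
  calc enorm4 ![0, v 1 + k * v 3, l⁻¹ * v 2, v 3]
      ≤ |0| + |v 1 + k * v 3| + |l⁻¹ * v 2| + |v 3| := enorm4_le_sum_abs _
    _ ≤ |k| + 3 := by rw [abs_zero]; linarith

theorem enorm4_nmlz_boostM_mulVec_sub_signedE1_le {l : ℝ} (hl : 1 ≤ l) (k : ℝ) {v : Fin 4 → ℝ}
    (hv : enorm4 v = 1) (hx : v 0 ≠ 0) :
    enorm4 (nmlz (boostM l k *ᵥ v) - signedE1 (v 0)) ≤
      2 * (|k / l| + 3 / l) / |v 0| := by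
  have hl0 : 0 < l := by linarith
  have hscale : 0 < l * |v 0| := by positivity
  rw [← nmlz_smul_of_pos (inv_pos.2 hscale)]
  refine (enorm4_nmlz_sub_le _ _ (enorm4_signedE1 _)).trans ?_
  rw [boostM_mulVec_smul_sub_signedE1 hl0 k hx, enorm4_smul, abs_of_pos (inv_pos.2 hscale)]
  calc 2 * ((l * |v 0|)⁻¹ * enorm4 ![0, v 1 + k * v 3, l⁻¹ * v 2, v 3])
      ≤ 2 * ((l * |v 0|)⁻¹ * (|k| + 3)) := by grw [enorm4_boostM_tail_le hl k hv]
    _ = 2 * (|k / l| + 3 / l) / |v 0| := by rw [abs_div, abs_of_pos hl0]; field_simp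

theorem stmt11_general (lam kk : ℕ → ℝ)
    (hlt : Tendsto lam atTop atTop)
    (hratio : Tendsto (fun n => kk n / lam n) atTop (nhds 0))
    (K : Set (Fin 4 → ℝ)) (hKc : IsCompact K)
    (hK : K ⊆ {v | enorm4 v = 1 ∧ v 0 ≠ 0 ∧ 0 ≤ v 3}) :
    ∀ ε > 0, ∃ N : ℕ, ∀ n ≥ N, ∀ v ∈ K,
      enorm4 (nmlz ((boostM (lam n) (kk n)).mulVec v) -
        (if 0 < v 0 then Pi.single 0 (1 : ℝ) else Pi.single 0 (-1 : ℝ))) < ε := by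
  intro ε hε
  obtain ⟨c, hc, hcK⟩ := hKc.exists_forall_le' (continuous_apply 0).abs.continuousOn
    fun v hv => abs_pos.2 (hK hv).2.1
  have hbound : Tendsto (fun n => 2 * (|kk n / lam n| + 3 / lam n)) atTop (nhds 0) := by
    simpa using (hratio.abs.add (tendsto_const_nhds.div_atTop hlt)).const_mul 2
  obtain ⟨N, hN⟩ := eventually_atTop.1
    ((hbound.eventually (gt_mem_nhds (mul_pos hε hc))).and (hlt.eventually_ge_atTop 1))
  refine ⟨N, fun n hn v hv => ?_⟩
  obtain ⟨hsmall, hl⟩ := hN n hn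
  obtain ⟨hv1, hx, -⟩ := hK hv
  calc _ ≤ 2 * (|kk n / lam n| + 3 / lam n) / |v 0| :=
        enorm4_nmlz_boostM_mulVec_sub_signedE1_le hl _ hv1 hx
    _ ≤ 2 * (|kk n / lam n| + 3 / lam n) / c :=
        div_le_div_of_nonneg_left (by positivity) hc (hcK v hv)
    _ < ε := (div_lt_iff₀ hc).2 hsmall

/-- As λ, k → ∞ with k/λ → 0, the projective boosts g_{λ,k}
converge, uniformly on compact subsets of {((x:y:z:t)) : x ≠ 0, t ≥ 0} ⊆ S³,
to the map ((x:y:z:t)) ↦ ((sgn x : 0 : 0 : 0)). -/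
theorem stmt11 (lam kk : ℕ → ℝ)
    (hlam : ∀ n, 1 < lam n) (hkk : ∀ n, 0 ≤ kk n)
    (hlt : Tendsto lam atTop atTop) (hkt : Tendsto kk atTop atTop)
    (hratio : Tendsto (fun n => kk n / lam n) atTop (nhds 0))
    (K : Set (Fin 4 → ℝ)) (hKc : IsCompact K)
    (hK : K ⊆ {v | enorm4 v = 1 ∧ v 0 ≠ 0 ∧ 0 ≤ v 3}) :
    ∀ ε > 0, ∃ N : ℕ, ∀ n ≥ N, ∀ v ∈ K,
      enorm4 (nmlz ((boostM (lam n) (kk n)).mulVec v) -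
        (if 0 < v 0 then Pi.single 0 (1 : ℝ) else Pi.single 0 (-1 : ℝ))) < ε :=
  stmt11_general lam kk hlt hratio K hKc hK

end
end

section
/- With g_{λ,k} as above (λ > 1, k ≥ 0), as λ, k → +∞ with k/λ → 0, the restriction of g_{λ,k} to the set {((0:y:z:t)) : t ≥ 0} minus the arc η_− = {((0:y:z:0)) : z ≠ 0 or y < 0} (i.e., the points with t > 0 together with ((0:1:0:0)) directions) converges locally uniformly to the constant map with value e_2 = ((0:1:0:0)). -/
open Filter

noncomputable section

lemma mulVec_boost (l k : ℝ) (v : Fin 4 → ℝ) :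
    (boostM l k).mulVec v = ![l * v 0, v 1 + k * v 3, l⁻¹ * v 2, v 3] := by
  funext i
  fin_cases i <;>
    simp [boostM, Matrix.mulVec, dotProduct, Fin.sum_univ_four]

lemma enorm4_eq (v : Fin 4 → ℝ) :
    enorm4 v = Real.sqrt ((v 0)^2 + (v 1)^2 + (v 2)^2 + (v 3)^2) := by
  simp [enorm4, Fin.sum_univ_four]

-- arithmetic mini-lemmas
lemma arith1 {x y z : ℝ} (h : x^2 + y^2 + z^2 = 1) : -1 ≤ x := by
  nlinarith [sq_nonneg y, sq_nonneg z, sq_nonneg (x + 1)]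

lemma arith2 {x y z : ℝ} (h : x^2 + y^2 + z^2 = 1) : y^2 ≤ 1 := by
  nlinarith [sq_nonneg x, sq_nonneg z]

lemma arith3 {δ k x z : ℝ} (hδx : δ ≤ x) (hk : 0 ≤ k) (hz : 0 ≤ z) :
    δ ≤ x + k * z := by nlinarith [mul_nonneg hk hz]

lemma arith4 {e δ k x z : ℝ} (he : 0 < e) (he1 : e ≤ 1) (hδ : 0 < δ) (hk : 0 ≤ k)
    (hke : δ + e ≤ e * δ * k) (hδz : δ ≤ z) (hx : -1 ≤ x) : δ ≤ x + k * z := by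
  nlinarith [mul_le_mul_of_nonneg_left hδz (mul_nonneg he.le hk),
    mul_le_of_le_one_right hδ.le he1, mul_le_mul_of_nonneg_left hx he.le]

lemma arith5 {e δ k x z : ℝ} (he : 0 < e) (hδ : 0 < δ) (hke : δ + e ≤ e * δ * k)
    (hδx : δ ≤ x) (hz : 0 ≤ z) : z ≤ e * (x + k * z) := by
  nlinarith [mul_le_mul_of_nonneg_right hke hz, mul_pos he hδ,
    mul_nonneg (mul_nonneg he.le hδ.le) hz, mul_le_mul_of_nonneg_left hδx he.le]

lemma arith6 {e δ k x z : ℝ} (he : 0 < e) (hδ : 0 < δ) (hke : δ + e ≤ e * δ * k)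
    (hδz : δ ≤ z) (hx : -1 ≤ x) : z ≤ e * (x + k * z) := by
  nlinarith [mul_le_mul_of_nonneg_right hke (le_trans hδ.le hδz),
    mul_le_mul_of_nonneg_left hx he.le, mul_pos he hδ]

lemma arith7 {e δ l a : ℝ} (he : 0 < e) (hl : 0 < l) (hle : 1 ≤ e * δ * l)
    (hδa : δ ≤ a) : 1 ≤ e * a * l := by
  nlinarith [mul_le_mul_of_nonneg_right hδa (mul_pos he hl).le]

lemma arith8 {b li ea : ℝ} (h1 : b^2 ≤ li^2) (h2 : li ≤ ea) (h3 : 0 ≤ li) :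
    b^2 ≤ ea^2 := by nlinarith

lemma arith9 {c ea : ℝ} (h1 : 0 ≤ c) (h2 : c ≤ ea) : c^2 ≤ ea^2 := by nlinarith

lemma arith10 {a N : ℝ} (h1 : a^2 ≤ N^2) (h2 : 0 ≤ a) (h3 : 0 ≤ N) : a ≤ N := by
  nlinarith

lemma arith11 {e a b c N : ℝ} (hN2 : N^2 = a^2 + b^2 + c^2)
    (hb : b^2 ≤ e^2 * a^2) (hc : c^2 ≤ e^2 * a^2) (ha : 0 < a) (haN : a ≤ N) :
    N - a ≤ e^2 * a := by
  nlinarith [mul_pos ha (lt_of_lt_of_le ha haN), sq_nonneg e]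

lemma arith12 {e ni N a : ℝ} (hni : N * ni = 1) (hNa : N - a ≤ e^2 * a)
    (hnia : ni * a ≤ 1) (hni0 : 0 ≤ ni) (he : 0 < e) :
    2 - 2 * (ni * a) < 9 * e^2 := by
  nlinarith [mul_le_mul_of_nonneg_left hNa hni0, mul_pos he he]

lemma core (e δ l k : ℝ) (v : Fin 4 → ℝ) (he : 0 < e) (he1 : e ≤ 1)
    (hδ : 0 < δ) (hl : 0 < l) (hk : 0 ≤ k)
    (hke : δ + e ≤ e * δ * k) (hle : 1 ≤ e * δ * l)
    (h0 : v 0 = 0) (hsq : (v 1)^2 + (v 2)^2 + (v 3)^2 = 1)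
    (h3 : 0 ≤ v 3) (hmax : δ ≤ max (v 1) (v 3)) :
    enorm4 (nmlz ((boostM l k).mulVec v) - Pi.single 1 (1:ℝ)) < 3 * e := by
  have hv1 : -1 ≤ v 1 := arith1 hsq
  have hv2sq : (v 2)^2 ≤ 1 := arith2 hsq
  obtain ⟨a, ha⟩ : ∃ x : ℝ, x = v 1 + k * v 3 := ⟨_, rfl⟩
  obtain ⟨b, hb⟩ : ∃ x : ℝ, x = l⁻¹ * v 2 := ⟨_, rfl⟩
  obtain ⟨c, hc⟩ : ∃ x : ℝ, x = v 3 := ⟨_, rfl⟩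
  have hc0 : 0 ≤ c := hc ▸ h3
  have hδa : δ ≤ a := by
    rw [ha]
    rcases le_max_iff.mp hmax with h | h
    · exact arith3 h hk h3
    · exact arith4 he he1 hδ hk hke h hv1
  have hapos : 0 < a := lt_of_lt_of_le hδ hδa
  have h3a : c ≤ e * a := by
    rw [ha, hc]
    rcases le_max_iff.mp hmax with h | h
    · exact arith5 he hδ hke h h3
    · exact arith6 he hδ hke h hv1
  have hli : l * l⁻¹ = 1 := mul_inv_cancel₀ (ne_of_gt hl)
  have hli0 : 0 ≤ l⁻¹ := inv_nonneg.mpr hl.le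
  have heal : 1 ≤ e * a * l := arith7 he hl hle hδa
  have hlia : l⁻¹ ≤ e * a := by
    have h' := mul_le_mul_of_nonneg_left heal hli0
    calc l⁻¹ = l⁻¹ * 1 := by ring
    _ ≤ l⁻¹ * (e * a * l) := h'
    _ = e * a * (l * l⁻¹) := by ring
    _ = e * a := by rw [hli]; ring
  have hb2 : b^2 ≤ (e * a)^2 := by
    refine arith8 ?_ hlia hli0
    rw [hb, mul_pow]
    calc (l⁻¹)^2 * (v 2)^2 ≤ (l⁻¹)^2 * 1 := mul_le_mul_of_nonneg_left hv2sq (sq_nonneg _)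
    _ = (l⁻¹)^2 := mul_one _
  have hb2' : b^2 ≤ e^2 * a^2 := by rw [← mul_pow]; exact hb2
  have hc2 : c^2 ≤ e^2 * a^2 := by rw [← mul_pow]; exact arith9 hc0 h3a
  obtain ⟨w, hw⟩ : ∃ x, x = (boostM l k).mulVec v := ⟨_, rfl⟩
  have hw0 : w 0 = 0 := by rw [hw, mulVec_boost]; simp [h0]
  have hw1 : w 1 = a := by rw [hw, mulVec_boost, ha]; simp
  have hw2 : w 2 = b := by rw [hw, mulVec_boost, hb]; simp
  have hw3 : w 3 = c := by rw [hw, mulVec_boost, hc]; simp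
  obtain ⟨N, hN⟩ : ∃ x, x = enorm4 w := ⟨_, rfl⟩
  have hsum0 : 0 ≤ a^2 + b^2 + c^2 := by positivity
  have hNeq : N = Real.sqrt (a^2 + b^2 + c^2) := by
    rw [hN, enorm4_eq, hw0, hw1, hw2, hw3]; ring_nf
  have hNpos : 0 < N := by
    rw [hNeq]; apply Real.sqrt_pos.mpr; nlinarith [sq_nonneg b, sq_nonneg c, hapos]
  have hN2 : N^2 = a^2 + b^2 + c^2 := by rw [hNeq]; exact Real.sq_sqrt hsum0
  have hni : N * N⁻¹ = 1 := mul_inv_cancel₀ (ne_of_gt hNpos)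
  have hni0 : 0 ≤ N⁻¹ := inv_nonneg.mpr hNpos.le
  have haN : a ≤ N := by
    refine arith10 ?_ hapos.le hNpos.le
    rw [hN2]; nlinarith [sq_nonneg b, sq_nonneg c]
  have hNa : N - a ≤ e^2 * a := arith11 hN2 hb2' hc2 hapos haN
  have hnia : N⁻¹ * a ≤ 1 := by
    have h' := mul_le_mul_of_nonneg_left haN hni0
    calc N⁻¹ * a ≤ N⁻¹ * N := h'
    _ = 1 := by rw [mul_comm]; exact hni
  have hgoal : enorm4 (nmlz w - Pi.single 1 (1:ℝ))
      = Real.sqrt ((N⁻¹ * a - 1)^2 + (N⁻¹ * b)^2 + (N⁻¹ * c)^2) := by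
    rw [enorm4_eq]
    have e0 : ((nmlz w - Pi.single 1 (1:ℝ) : Fin 4 → ℝ)) 0 = 0 := by
      simp [nmlz, ← hN, hw0, Pi.single_apply]
    have e1 : ((nmlz w - Pi.single 1 (1:ℝ) : Fin 4 → ℝ)) 1 = N⁻¹ * a - 1 := by
      simp [nmlz, ← hN, hw1, Pi.single_apply]
    have e2 : ((nmlz w - Pi.single 1 (1:ℝ) : Fin 4 → ℝ)) 2 = N⁻¹ * b := by
      simp [nmlz, ← hN, hw2, Pi.single_apply]
    have e3 : ((nmlz w - Pi.single 1 (1:ℝ) : Fin 4 → ℝ)) 3 = N⁻¹ * c := by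
      simp [nmlz, ← hN, hw3, Pi.single_apply]
    rw [e0, e1, e2, e3]; ring_nf
  rw [← hw, hgoal, Real.sqrt_lt' (by positivity)]
  have hexp : (N⁻¹ * a - 1)^2 + (N⁻¹ * b)^2 + (N⁻¹ * c)^2 = 2 - 2 * (N⁻¹ * a) := by
    have h2 : (N⁻¹)^2 * (a^2 + b^2 + c^2) = 1 := by
      rw [← hN2]
      calc (N⁻¹)^2 * N^2 = (N * N⁻¹)^2 := by ring
      _ = 1 := by rw [hni]; norm_num
    linear_combination h2
  rw [hexp]
  calc 2 - 2 * (N⁻¹ * a) < 9 * e^2 := arith12 hni hNa hnia hni0 he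
  _ = (3 * e)^2 := by ring

set_option maxHeartbeats 1000000 in
/-- As λ, k → ∞ with k/λ → 0, the restriction of g_{λ,k} to
{((0:y:z:t)) : t ≥ 0} minus the repelling arc η₋ (the closed semicircle
{((0:y:z:0)) : y ≤ 0} of the great circle x = t = 0) converges locally
uniformly to the constant map with value e₂ = ((0:1:0:0)). -/
theorem stmt12 (lam kk : ℕ → ℝ)
    (hlam : ∀ n, 1 < lam n) (hkk : ∀ n, 0 ≤ kk n)
    (hlt : Tendsto lam atTop atTop) (hkt : Tendsto kk atTop atTop)
    (hratio : Tendsto (fun n => kk n / lam n) atTop (nhds 0))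
    (K : Set (Fin 4 → ℝ)) (hKc : IsCompact K)
    (hK : K ⊆ {v | enorm4 v = 1 ∧ v 0 = 0 ∧ 0 ≤ v 3 ∧ ¬(v 3 = 0 ∧ v 1 ≤ 0)}) :
    ∀ ε > 0, ∃ N : ℕ, ∀ n ≥ N, ∀ v ∈ K,
      enorm4 (nmlz ((boostM (lam n) (kk n)).mulVec v) - Pi.single 1 (1 : ℝ)) < ε := by
  intro ε hε
  rcases K.eq_empty_or_nonempty with hKe | hKne
  · exact ⟨0, fun n _ v hv => absurd (hKe ▸ hv) (Set.notMem_empty v)⟩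
  obtain ⟨v₀, hv₀K, hmin⟩ := hKc.exists_isMinOn hKne
    ((continuous_apply 1).max (continuous_apply 3)).continuousOn
  obtain ⟨hn₀, h0₀, h3₀, hne₀⟩ := hK hv₀K
  have hδpos : 0 < max (v₀ 1) (v₀ 3) := by
    rcases eq_or_lt_of_le h3₀ with h | h
    · have h1 : 0 < v₀ 1 := by
        by_contra h1
        exact hne₀ ⟨h.symm, le_of_not_gt h1⟩
      exact lt_of_lt_of_le h1 (le_max_left _ _)
    · exact lt_of_lt_of_le h (le_max_right _ _)
  obtain ⟨δ, hδdef⟩ : ∃ x : ℝ, x = max (v₀ 1) (v₀ 3) := ⟨_, rfl⟩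
  rw [← hδdef] at hδpos
  obtain ⟨e, hedef⟩ : ∃ x : ℝ, x = min (ε/3) 1 := ⟨_, rfl⟩
  have he : 0 < e := hedef ▸ lt_min (by linarith) one_pos
  have he1 : e ≤ 1 := hedef ▸ min_le_right _ _
  have heε : e ≤ ε/3 := hedef ▸ min_le_left _ _
  have heδ : 0 < e * δ := mul_pos he hδpos
  obtain ⟨N, hN⟩ := Filter.eventually_atTop.mp
    ((hkt.eventually_ge_atTop ((δ + e)/(e*δ))).and
      (hlt.eventually_ge_atTop (1/(e*δ))))
  refine ⟨N, fun n hn v hv => ?_⟩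
  obtain ⟨hnv, h0v, h3v, _⟩ := hK hv
  have hsq4 : (v 0)^2 + (v 1)^2 + (v 2)^2 + (v 3)^2 = 1 := by
    have h' : Real.sqrt ((v 0)^2 + (v 1)^2 + (v 2)^2 + (v 3)^2) = 1 := by
      rw [← enorm4_eq]; exact hnv
    rw [← Real.sq_sqrt (by positivity : (0:ℝ) ≤ (v 0)^2 + (v 1)^2 + (v 2)^2 + (v 3)^2), h']
    norm_num
  have hsqv : (v 1)^2 + (v 2)^2 + (v 3)^2 = 1 := by
    rw [h0v] at hsq4; linarith [hsq4]
  have hmaxv : δ ≤ max (v 1) (v 3) := by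
    rw [hδdef]; exact isMinOn_iff.mp hmin v hv
  have hke : δ + e ≤ e * δ * kk n := by
    have h' := (div_le_iff₀ heδ).mp (hN n hn).1
    calc δ + e ≤ kk n * (e * δ) := h'
    _ = e * δ * kk n := by ring
  have hle : 1 ≤ e * δ * lam n := by
    have h' := (div_le_iff₀ heδ).mp (hN n hn).2
    calc (1:ℝ) ≤ lam n * (e * δ) := h'
    _ = e * δ * lam n := by ring
  have hres := core e δ (lam n) (kk n) v he he1 hδpos
    (lt_trans one_pos (hlam n)) (hkk n) hke hle h0v hsqv h3v hmaxv
  exact hres.trans_le (by linarith : 3 * e ≤ ε)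

end
end

section
/- The conjugacy class in Isom^+(E) of an affine boost γ is completely determined by the pair (ℓ, α) ∈ R_{>0} × (R \ {0}): two affine boosts with the same ℓ (translation length of the linear part on H^2, equivalently with linear parts having the same eigenvalue e^ℓ) and the same Margulis invariant α are conjugate by an orientation-preserving Lorentz isometry. -/
open Matrix

noncomputable section

/-- The Lorentz form of signature (2,1) on ℝ³. -/
def lorB (x y : Fin 3 → ℝ) : ℝ := x 0 * y 0 + x 1 * y 1 - x 2 * y 2

/-- The standard Lorentz form matrix of signature (2,1) on ℝ³. -/
def J3 : Matrix (Fin 3) (Fin 3) ℝ := !![1, 0, 0; 0, 1, 0; 0, 0, -1]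

/-!
Both linear parts are diagonalised, in a frame made of the two null eigenvectors and the unit
neutral eigenvector, with the same eigenvalues and the same Gram matrix: the causal condition
makes ⟨v₊, v₋⟩ negative, so v₋ can be rescaled to ⟨v₊, v₋⟩ = -1, and the orientation condition
then forces the frame to have determinant 1. The change of frame L is an orientation-preserving
Lorentz transformation conjugating g₁ to g₂ and mapping v₀(γ₁) to v₀(γ₂). Conjugating γ₁ by
p ↦ L p + c leaves a translation defect L b₁ - b₂, which is Lorentz-orthogonal to v₀(γ₂)
because the Margulis invariants agree; the image of g₂ - 1 is exactly that orthogonal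
complement, so c can be chosen to absorb the defect.
-/

lemma lorB_eq_dotProduct_mulVec (x y : Fin 3 → ℝ) : lorB x y = x ⬝ᵥ J3 *ᵥ y := by
  simp only [lorB, J3, dotProduct, mulVec, Fin.sum_univ_three, of_apply, cons_val',
    cons_val_fin_one, cons_val_zero, cons_val_one, cons_val]
  ring

lemma lorB_comm (x y : Fin 3 → ℝ) : lorB x y = lorB y x := by
  simp only [lorB]; ring

lemma lorB_sub_left (x y z : Fin 3 → ℝ) : lorB (x - y) z = lorB x z - lorB y z := by
  simp only [lorB, Pi.sub_apply]; ring

lemma lorB_smul_left (x y : Fin 3 → ℝ) (r : ℝ) : lorB (r • x) y = r * lorB x y := by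
  simp only [lorB, Pi.smul_apply, smul_eq_mul]; ring

lemma lorB_smul_right (x y : Fin 3 → ℝ) (r : ℝ) : lorB x (r • y) = r * lorB x y := by
  simp only [lorB, Pi.smul_apply, smul_eq_mul]; ring

lemma lorB_mulVec_mulVec {g C : Matrix (Fin 3) (Fin 3) ℝ} (h : gᵀ * J3 * g = C)
    (x y : Fin 3 → ℝ) : lorB (g *ᵥ x) (g *ᵥ y) = x ⬝ᵥ C *ᵥ y := by
  rw [lorB_eq_dotProduct_mulVec, dotProduct_mulVec, ← vecMul_transpose, vecMul_vecMul,
    ← dotProduct_mulVec, mulVec_mulVec, h]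

lemma lorB_mulVec_mulVec_of_isometry {g : Matrix (Fin 3) (Fin 3) ℝ} (h : gᵀ * J3 * g = J3)
    (x y : Fin 3 → ℝ) : lorB (g *ᵥ x) (g *ᵥ y) = lorB x y := by
  rw [lorB_mulVec_mulVec h, lorB_eq_dotProduct_mulVec]

lemma lorB_eq_zero_of_eigenvectors {g : Matrix (Fin 3) (Fin 3) ℝ} (h : gᵀ * J3 * g = J3)
    {s t : ℝ} {x y : Fin 3 → ℝ} (hx : g *ᵥ x = s • x) (hy : g *ᵥ y = t • y) (hst : s * t ≠ 1) :
    lorB x y = 0 := by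
  have key := lorB_mulVec_mulVec_of_isometry h x y
  rw [hx, hy] at key
  have : (s * t - 1) * lorB x y = 0 := by
    simp only [lorB, Pi.smul_apply, smul_eq_mul] at key ⊢
    linear_combination key
  exact (mul_eq_zero.mp this).resolve_left (sub_ne_zero.mpr hst)

-- (x₀y₀ + x₁y₁)² ≤ (x₀² + x₁²)(y₀² + y₁²) = (x₂y₂)² by Cauchy–Schwarz in the spacelike plane.
lemma lorB_nonpos_of_isotropic {x y : Fin 3 → ℝ} (hx : lorB x x = 0) (hy : lorB y y = 0)
    (hxy : 0 < x 2 * y 2) : lorB x y ≤ 0 := by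
  simp only [lorB] at hx hy ⊢
  nlinarith [sq_nonneg (x 0 * y 1 - x 1 * y 0), sq_nonneg (x 0 * y 0 + x 1 * y 1 + x 2 * y 2)]

lemma eq_zero_of_lorB_eq_zero {f : Fin 3 → Fin 3 → ℝ} (hf : (of f).det ≠ 0) {x : Fin 3 → ℝ}
    (hx : ∀ i, lorB x (f i) = 0) : x = 0 := by
  have hJx : of f *ᵥ (J3 *ᵥ x) = 0 := by
    ext i
    rw [Pi.zero_apply, ← hx i, lorB_comm, lorB_eq_dotProduct_mulVec]
    rfl
  have hJ : J3.det ≠ 0 := by simp [J3, det_fin_three]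
  exact eq_zero_of_mulVec_eq_zero hJ (eq_zero_of_mulVec_eq_zero hf hJx)

def nullFrameGram : Matrix (Fin 3) (Fin 3) ℝ := !![0, 0, -1; 0, 1, 0; -1, 0, 0]

lemma of_mul_J3_mul_transpose (f : Fin 3 → Fin 3 → ℝ) :
    of f * J3 * (of f)ᵀ = of fun i j => lorB (f i) (f j) := by
  ext i j
  simp [J3, lorB, mul_apply, Fin.sum_univ_three, sub_eq_add_neg]

lemma mul_transpose_of_eq_diagonal {n R : Type*} [Fintype n] [DecidableEq n] [CommSemiring R]
    {g : Matrix n n R} {f : n → n → R} {d : n → R} (h : ∀ i, g *ᵥ f i = d i • f i) :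
    g * (of f)ᵀ = (of f)ᵀ * diagonal d := by
  ext r c
  calc (g * (of f)ᵀ) r c = (g *ᵥ f c) r := rfl
    _ = ((of f)ᵀ * diagonal d) r c := by simp [h c, mul_diagonal, mul_comm]

lemma fin_three_cols_eq_transpose_of (u v w : Fin 3 → ℝ) :
    !![u 0, v 0, w 0; u 1, v 1, w 1; u 2, v 2, w 2] = (of ![u, v, w])ᵀ := by
  ext i j
  fin_cases i <;> fin_cases j <;> rfl

lemma det_eq_one_of_transpose_mul_J3_mul_eq_nullFrameGram {M : Matrix (Fin 3) (Fin 3) ℝ}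
    (hM : Mᵀ * J3 * M = nullFrameGram) (hpos : 0 < M.det) : M.det = 1 := by
  have h := congrArg det hM
  rw [det_mul, det_mul, det_transpose] at h
  have hJ : J3.det = -1 := by simp [J3, det_fin_three]
  have hB : nullFrameGram.det = -1 := by simp [nullFrameGram, det_fin_three]
  rw [hJ, hB] at h
  nlinarith

lemma lorB_ne_zero_of_isotropic_frame {vp v0 vm : Fin 3 → ℝ} (hdet : (of ![vp, v0, vm]).det ≠ 0)
    (hvp : vp ≠ 0) (hpp : lorB vp vp = 0) (hp0 : lorB vp v0 = 0) : lorB vp vm ≠ 0 := fun hpm =>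
  hvp <| eq_zero_of_lorB_eq_zero hdet fun i => by fin_cases i <;> assumption

lemma exists_boost_frame {E F : ℝ} (hE : 1 < E) (hEF : E * F = 1)
    {g : Matrix (Fin 3) (Fin 3) ℝ} (hform : gᵀ * J3 * g = J3) {vp vm v0 : Fin 3 → ℝ}
    (hp : g *ᵥ vp = E • vp) (hvp : vp ≠ 0) (hm : g *ᵥ vm = F • vm)
    (h0 : g *ᵥ v0 = v0) (hu : lorB v0 v0 = 1)
    (hcaus : (0 < vp 2 ∧ 0 < vm 2) ∨ (vp 2 < 0 ∧ vm 2 < 0))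
    (hor : 0 < (of ![vp, v0, vm]).det) :
    ∃ M : Matrix (Fin 3) (Fin 3) ℝ, M.det = 1 ∧ g * M = M * diagonal ![E, 1, F] ∧
      Mᵀ * J3 * M = nullFrameGram ∧ M *ᵥ Pi.single 1 1 = v0 := by
  have hF : 0 < F ∧ F < 1 := by constructor <;> nlinarith
  have h0' : g *ᵥ v0 = (1 : ℝ) • v0 := by rw [h0, one_smul]
  have hpp := lorB_eq_zero_of_eigenvectors hform hp hp (by nlinarith)
  have hmm := lorB_eq_zero_of_eigenvectors hform hm hm (by nlinarith)
  have hp0 := lorB_eq_zero_of_eigenvectors hform hp h0' (by linarith)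
  have hm0 := lorB_eq_zero_of_eigenvectors hform hm h0' (by linarith)
  have hpm : lorB vp vm < 0 := by
    refine lt_of_le_of_ne (lorB_nonpos_of_isotropic hpp hmm ?_)
      (lorB_ne_zero_of_isotropic_frame hor.ne' hvp hpp hp0)
    rcases hcaus with ⟨h₁, h₂⟩ | ⟨h₁, h₂⟩
    · exact mul_pos h₁ h₂
    · exact mul_pos_of_neg_of_neg h₁ h₂
  obtain ⟨κ, hκ, hpmκ⟩ : ∃ κ : ℝ, 0 < κ ∧ lorB vp vm = -κ := ⟨-lorB vp vm, by linarith, by ring⟩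
  set M : Matrix (Fin 3) (Fin 3) ℝ := (of ![vp, v0, κ⁻¹ • vm])ᵀ with hM
  have hgram : Mᵀ * J3 * M = nullFrameGram := by
    rw [hM, transpose_transpose, of_mul_J3_mul_transpose]
    ext i j
    fin_cases i <;> fin_cases j <;>
      simp [nullFrameGram, lorB_smul_left, lorB_smul_right, lorB_comm vm vp, lorB_comm v0 vp,
        lorB_comm v0 vm, hpp, hmm, hp0, hm0, hpmκ, hu, hκ.ne']
  have hdet : M.det = κ⁻¹ * (of ![vp, v0, vm]).det := by
    simp only [hM, det_transpose, det_fin_three, of_apply, cons_val', cons_val_fin_one,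
      cons_val_zero, cons_val_one, cons_val, Pi.smul_apply, smul_eq_mul]
    ring
  refine ⟨M, det_eq_one_of_transpose_mul_J3_mul_eq_nullFrameGram hgram ?_, ?_, hgram, ?_⟩
  · rw [hdet]
    exact mul_pos (inv_pos.mpr hκ) hor
  · refine mul_transpose_of_eq_diagonal fun i => ?_
    fin_cases i
    · simpa using hp
    · simpa using h0
    · simp [mulVec_smul, hm, smul_comm F]
  · rw [mulVec_single_one]
    rfl

section Conjugation

variable {n R : Type*} [Fintype n] [CommRing R]

lemma semiconjBy_mul_nonsing_inv [DecidableEq n] {D g₁ g₂ M₁ M₂ : Matrix n n R}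
    (hM₁ : IsUnit M₁.det) (hg₁ : g₁ * M₁ = M₁ * D) (hg₂ : g₂ * M₂ = M₂ * D) :
    SemiconjBy (M₂ * M₁⁻¹) g₁ g₂ := by
  unfold SemiconjBy
  calc M₂ * M₁⁻¹ * g₁ = M₂ * M₁⁻¹ * (g₁ * M₁) * M₁⁻¹ := by
        simp only [Matrix.mul_assoc, mul_nonsing_inv _ hM₁, Matrix.mul_one]
    _ = g₂ * (M₂ * M₁⁻¹) := by
        rw [hg₁, ← Matrix.mul_assoc, Matrix.mul_assoc M₂, nonsing_inv_mul _ hM₁, Matrix.mul_one,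
          ← hg₂, Matrix.mul_assoc]

lemma transpose_mul_mul_self_of_transpose_mul_mul_eq [DecidableEq n] {J B M₁ M₂ : Matrix n n R}
    (hM₁ : IsUnit M₁.det) (hJ₁ : M₁ᵀ * J * M₁ = B) (hJ₂ : M₂ᵀ * J * M₂ = B) :
    (M₂ * M₁⁻¹)ᵀ * J * (M₂ * M₁⁻¹) = J :=
  calc (M₂ * M₁⁻¹)ᵀ * J * (M₂ * M₁⁻¹) = M₁⁻¹ᵀ * (M₂ᵀ * J * M₂) * M₁⁻¹ := by
        simp only [transpose_mul, Matrix.mul_assoc]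
    _ = (M₁ * M₁⁻¹)ᵀ * J * (M₁ * M₁⁻¹) := by
        rw [hJ₂, ← hJ₁]
        simp only [transpose_mul, Matrix.mul_assoc]
    _ = J := by simp [mul_nonsing_inv _ hM₁]

lemma mulVec_add_add_eq_of_semiconjBy {L g₁ g₂ : Matrix n n R} {b₁ b₂ c : n → R}
    (hL : SemiconjBy L g₁ g₂) (hc : g₂ *ᵥ c - c = L *ᵥ b₁ - b₂) (p : n → R) :
    L *ᵥ (g₁ *ᵥ p + b₁) + c = g₂ *ᵥ (L *ᵥ p + c) + b₂ := by
  rw [mulVec_add, mulVec_add, mulVec_mulVec, mulVec_mulVec, hL.eq]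
  linear_combination (exp := 1) -hc

end Conjugation

-- Solve (d i - 1) tᵢ = uᵢ in eigencoordinates; where d i = 1, uᵢ = 0 and tᵢ = uᵢ / 0 = 0 works.
lemma exists_mulVec_sub_eq_mulVec {n K : Type*} [Fintype n] [DecidableEq n] [Field K]
    {g M : Matrix n n K} {d u : n → K} (hg : g * M = M * diagonal d)
    (hu : ∀ i, d i = 1 → u i = 0) : ∃ c, g *ᵥ c - c = M *ᵥ u := by
  refine ⟨M *ᵥ fun i => u i / (d i - 1), ?_⟩
  rw [mulVec_mulVec, hg, ← mulVec_mulVec, ← mulVec_sub]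
  congr 1
  ext i
  rw [Pi.sub_apply, mulVec_diagonal, ← sub_one_mul]
  by_cases hi : d i = 1
  · simp [hi, hu i hi]
  · exact mul_div_cancel₀ _ (sub_ne_zero.mpr hi)

lemma lorB_mulVec_mulVec_single_one {M : Matrix (Fin 3) (Fin 3) ℝ}
    (hM : Mᵀ * J3 * M = nullFrameGram) (u : Fin 3 → ℝ) :
    lorB (M *ᵥ u) (M *ᵥ Pi.single 1 1) = u 1 := by
  rw [lorB_mulVec_mulVec hM]
  simp [nullFrameGram, mulVec, dotProduct, Fin.sum_univ_three]

theorem stmt15_general (l a : ℝ) (hl : 0 < l)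
    (g₁ g₂ : Matrix (Fin 3) (Fin 3) ℝ) (b₁ b₂ : Fin 3 → ℝ)
    (vp₁ vm₁ v0₁ vp₂ vm₂ v0₂ : Fin 3 → ℝ)
    (hform₁ : g₁ᵀ * J3 * g₁ = J3)
    (hform₂ : g₂ᵀ * J3 * g₂ = J3)
    (hp₁ : g₁.mulVec vp₁ = Real.exp l • vp₁) (hp₁0 : vp₁ ≠ 0)
    (hm₁ : g₁.mulVec vm₁ = Real.exp (-l) • vm₁)
    (h0₁ : g₁.mulVec v0₁ = v0₁) (hu₁ : lorB v0₁ v0₁ = 1)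
    (hp₂ : g₂.mulVec vp₂ = Real.exp l • vp₂) (hp₂0 : vp₂ ≠ 0)
    (hm₂ : g₂.mulVec vm₂ = Real.exp (-l) • vm₂)
    (h0₂ : g₂.mulVec v0₂ = v0₂) (hu₂ : lorB v0₂ v0₂ = 1)
    (hcaus₁ : (0 < vp₁ 2 ∧ 0 < vm₁ 2) ∨ (vp₁ 2 < 0 ∧ vm₁ 2 < 0))
    (hcaus₂ : (0 < vp₂ 2 ∧ 0 < vm₂ 2) ∨ (vp₂ 2 < 0 ∧ vm₂ 2 < 0))
    (hor₁ : 0 < Matrix.det !![vp₁ 0, v0₁ 0, vm₁ 0;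
                              vp₁ 1, v0₁ 1, vm₁ 1;
                              vp₁ 2, v0₁ 2, vm₁ 2])
    (hor₂ : 0 < Matrix.det !![vp₂ 0, v0₂ 0, vm₂ 0;
                              vp₂ 1, v0₂ 1, vm₂ 1;
                              vp₂ 2, v0₂ 2, vm₂ 2])
    (hmu₁ : lorB b₁ v0₁ = a) (hmu₂ : lorB b₂ v0₂ = a) :
    ∃ (L : Matrix (Fin 3) (Fin 3) ℝ) (c : Fin 3 → ℝ),
      Lᵀ * J3 * L = J3 ∧ L.det = 1 ∧
      ∀ p : Fin 3 → ℝ,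
        L.mulVec (g₁.mulVec p + b₁) + c = g₂.mulVec (L.mulVec p + c) + b₂ := by
  have hE : 1 < Real.exp l := Real.one_lt_exp_iff.mpr hl
  have hEF : Real.exp l * Real.exp (-l) = 1 := by
    rw [← Real.exp_add, add_neg_cancel, Real.exp_zero]
  rw [fin_three_cols_eq_transpose_of, det_transpose] at hor₁ hor₂
  obtain ⟨M₁, hd₁, hg₁, hJ₁, he₁⟩ :=
    exists_boost_frame hE hEF hform₁ hp₁ hp₁0 hm₁ h0₁ hu₁ hcaus₁ hor₁
  obtain ⟨M₂, hd₂, hg₂, hJ₂, he₂⟩ :=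
    exists_boost_frame hE hEF hform₂ hp₂ hp₂0 hm₂ h0₂ hu₂ hcaus₂ hor₂
  have hM₁ : IsUnit M₁.det := by simp [hd₁]
  have hM₂ : IsUnit M₂.det := by simp [hd₂]
  set L := M₂ * M₁⁻¹
  have hLJ : Lᵀ * J3 * L = J3 := transpose_mul_mul_self_of_transpose_mul_mul_eq hM₁ hJ₁ hJ₂
  have hLv0 : L *ᵥ v0₁ = v0₂ := by
    rw [← he₁, ← he₂, mulVec_mulVec, nonsing_inv_mul_cancel_right _ _ hM₁]
  set w := L *ᵥ b₁ - b₂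
  have hw : lorB w v0₂ = 0 := by
    rw [lorB_sub_left, ← hLv0, lorB_mulVec_mulVec_of_isometry hLJ, hmu₁, hLv0, hmu₂, sub_self]
  obtain ⟨c, hc⟩ := exists_mulVec_sub_eq_mulVec hg₂ (u := M₂⁻¹ *ᵥ w) fun i hi => by
    fin_cases i
    · exact absurd hi hE.ne'
    · change (M₂⁻¹ *ᵥ w) 1 = 0
      rw [← lorB_mulVec_mulVec_single_one hJ₂ (M₂⁻¹ *ᵥ w), he₂, mulVec_mulVec,
        mul_nonsing_inv _ hM₂, one_mulVec, hw]
    · exact absurd hi (Real.exp_lt_one_iff.mpr (neg_neg_of_pos hl)).ne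
  rw [mulVec_mulVec, mul_nonsing_inv _ hM₂, one_mulVec] at hc
  refine ⟨L, c, hLJ, by simp [L, hd₁, hd₂], ?_⟩
  exact mulVec_add_add_eq_of_semiconjBy (semiconjBy_mul_nonsing_inv hM₁ hg₁ hg₂) hc

/-- Two affine boosts with the same eigenvalue parameter e^ℓ of
the linear part and the same Margulis invariant α are conjugate in Isom⁺(E),
the group of orientation-preserving Lorentz isometries.  Here each boost
γᵢ(p) = gᵢ p + bᵢ has linear part gᵢ ∈ SO(2,1) with null eigenvectors vpᵢ, vmᵢ
(eigenvalues e^ℓ, e^{−ℓ}) of the same causal character, unit spacelike neutral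
eigenvector v0ᵢ making (vpᵢ, v0ᵢ, vmᵢ) positively oriented, Margulis invariant
lorB bᵢ v0ᵢ = α, and acts freely. -/
theorem stmt15 (l a : ℝ) (hl : 0 < l) (ha : a ≠ 0)
    (g₁ g₂ : Matrix (Fin 3) (Fin 3) ℝ) (b₁ b₂ : Fin 3 → ℝ)
    (vp₁ vm₁ v0₁ vp₂ vm₂ v0₂ : Fin 3 → ℝ)
    (hform₁ : g₁ᵀ * J3 * g₁ = J3) (hdet₁ : g₁.det = 1)
    (hform₂ : g₂ᵀ * J3 * g₂ = J3) (hdet₂ : g₂.det = 1)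
    (hp₁ : g₁.mulVec vp₁ = Real.exp l • vp₁) (hp₁0 : vp₁ ≠ 0)
    (hm₁ : g₁.mulVec vm₁ = Real.exp (-l) • vm₁) (hm₁0 : vm₁ ≠ 0)
    (h0₁ : g₁.mulVec v0₁ = v0₁) (hu₁ : lorB v0₁ v0₁ = 1)
    (hp₂ : g₂.mulVec vp₂ = Real.exp l • vp₂) (hp₂0 : vp₂ ≠ 0)
    (hm₂ : g₂.mulVec vm₂ = Real.exp (-l) • vm₂) (hm₂0 : vm₂ ≠ 0)
    (h0₂ : g₂.mulVec v0₂ = v0₂) (hu₂ : lorB v0₂ v0₂ = 1)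
    (hcaus₁ : (0 < vp₁ 2 ∧ 0 < vm₁ 2) ∨ (vp₁ 2 < 0 ∧ vm₁ 2 < 0))
    (hcaus₂ : (0 < vp₂ 2 ∧ 0 < vm₂ 2) ∨ (vp₂ 2 < 0 ∧ vm₂ 2 < 0))
    (hor₁ : 0 < Matrix.det !![vp₁ 0, v0₁ 0, vm₁ 0;
                              vp₁ 1, v0₁ 1, vm₁ 1;
                              vp₁ 2, v0₁ 2, vm₁ 2])
    (hor₂ : 0 < Matrix.det !![vp₂ 0, v0₂ 0, vm₂ 0;
                              vp₂ 1, v0₂ 1, vm₂ 1;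
                              vp₂ 2, v0₂ 2, vm₂ 2])
    (hmu₁ : lorB b₁ v0₁ = a) (hmu₂ : lorB b₂ v0₂ = a)
    (hfree₁ : ∀ p : Fin 3 → ℝ, g₁.mulVec p + b₁ ≠ p)
    (hfree₂ : ∀ p : Fin 3 → ℝ, g₂.mulVec p + b₂ ≠ p) :
    ∃ (L : Matrix (Fin 3) (Fin 3) ℝ) (c : Fin 3 → ℝ),
      Lᵀ * J3 * L = J3 ∧ L.det = 1 ∧
      ∀ p : Fin 3 → ℝ,
        L.mulVec (g₁.mulVec p + b₁) + c = g₂.mulVec (L.mulVec p + c) + b₂ :=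
  stmt15_general l a hl g₁ g₂ b₁ b₂ vp₁ vm₁ v0₁ vp₂ vm₂ v0₂ hform₁ hform₂ hp₁ hp₁0 hm₁ h0₁ hu₁ hp₂
    hp₂0 hm₂ h0₂ hu₂ hcaus₁ hcaus₂ hor₁ hor₂ hmu₁ hmu₂

end
end
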